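/- arXiv:1908.03519 — 2 statements merged into one kernel-verified Lean document; each statement's English description precedes it below -/
import Mathlib

section
/- Let A be a real m×n matrix such that A·Aᵀ is invertible, let W ∈ ℝⁿ and Z ∈ ℝᵐ. Define W̃ = W + Aᵀ·(A·Aᵀ)⁻¹·(Z − A·W). Then A·W̃ = Z, and for every x ∈ ℝⁿ with A·x = Z one has ‖W̃ − W‖² ≤ ‖x − W‖², with equality if and only if x = W̃. (Least-squares solution of the extrinsic consistency constraint, full-row-rank case of Theorem 3.1.) -/
/-!
`W̃ - W = Aᵀ u` lies in the row space of `A`, while for any solution `x` of `A x = Z` the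
difference `x - W̃` lies in the kernel of `A`. These are orthogonal, so Pythagoras gives
`‖x - W‖² = ‖x - W̃‖² + ‖W̃ - W‖²`, from which minimality and uniqueness follow.
-/

open Matrix

namespace Matrix

variable {ι κ R : Type*} [Fintype ι] [Fintype κ]

theorem mulVec_add_mulVec_sub_mulVec_of_mul_eq_one [CommRing R] [DecidableEq κ]
    {A : Matrix κ ι R} {B : Matrix ι κ R} (hAB : A * B = 1) (W : ι → R) (Z : κ → R) :
    A *ᵥ (W + B *ᵥ (Z - A *ᵥ W)) = Z := by
  rw [mulVec_add, mulVec_mulVec, hAB, one_mulVec, add_sub_cancel]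

theorem mul_transpose_mul_inv_eq_one_of_isUnit [CommRing R] [DecidableEq κ]
    {A : Matrix κ ι R} (hA : IsUnit (A * Aᵀ)) : A * (Aᵀ * (A * Aᵀ)⁻¹) = 1 := by
  rw [← Matrix.mul_assoc, mul_nonsing_inv _ ((isUnit_iff_isUnit_det _).mp hA)]

theorem dotProduct_transpose_mulVec_eq_zero [CommSemiring R] {A : Matrix κ ι R}
    {y : ι → R} (hy : A *ᵥ y = 0) (u : κ → R) : y ⬝ᵥ (Aᵀ *ᵥ u) = 0 := by
  rw [dotProduct_mulVec, vecMul_transpose, hy, zero_dotProduct]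

theorem add_dotProduct_self_of_dotProduct_eq_zero [CommRing R] {a b : ι → R}
    (h : a ⬝ᵥ b = 0) : (a + b) ⬝ᵥ (a + b) = a ⬝ᵥ a + b ⬝ᵥ b := by
  rw [add_dotProduct, dotProduct_add, dotProduct_add, dotProduct_comm b a, h]
  abel

theorem sub_dotProduct_self_eq_of_mulVec_eq [CommRing R] {A : Matrix κ ι R}
    {x p w : ι → R} {u : κ → R} (hx : A *ᵥ x = A *ᵥ p) (hp : p - w = Aᵀ *ᵥ u) :
    (x - w) ⬝ᵥ (x - w) = (x - p) ⬝ᵥ (x - p) + (p - w) ⬝ᵥ (p - w) := by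
  have hker : A *ᵥ (x - p) = 0 := by rw [mulVec_sub, hx, sub_self]
  rw [← add_dotProduct_self_of_dotProduct_eq_zero
    (hp ▸ dotProduct_transpose_mulVec_eq_zero hker u), sub_add_sub_cancel]

theorem dotProduct_self_nonneg [Ring R] [LinearOrder R] [IsStrictOrderedRing R]
    (v : ι → R) : 0 ≤ v ⬝ᵥ v :=
  Finset.sum_nonneg fun i _ => mul_self_nonneg (v i)

end Matrix

/-- Least-squares solution of the extrinsic consistency constraint
(full-row-rank case of Theorem 3.1): if `A * Aᵀ` is invertible, then
`W̃ = W + Aᵀ (A Aᵀ)⁻¹ (Z - A W)` satisfies `A W̃ = Z` and is the unique closest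
point to `W` among solutions of `A x = Z`. -/
theorem stmt_0 {m n : ℕ} (A : Matrix (Fin m) (Fin n) ℝ)
    (hA : IsUnit (A * Aᵀ))
    (W : Fin n → ℝ) (Z : Fin m → ℝ) (Wt : Fin n → ℝ)
    (hWt : Wt = W + (Aᵀ * (A * Aᵀ)⁻¹).mulVec (Z - A.mulVec W)) :
    A.mulVec Wt = Z ∧
    ∀ x : Fin n → ℝ, A.mulVec x = Z →
      (∑ i, (Wt i - W i) ^ 2 ≤ ∑ i, (x i - W i) ^ 2) ∧
      ((∑ i, (Wt i - W i) ^ 2 = ∑ i, (x i - W i) ^ 2) ↔ x = Wt) := by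
  have hAWt : A *ᵥ Wt = Z :=
    hWt ▸ mulVec_add_mulVec_sub_mulVec_of_mul_eq_one
      (mul_transpose_mul_inv_eq_one_of_isUnit hA) W Z
  have hrow : Wt - W = Aᵀ *ᵥ ((A * Aᵀ)⁻¹ *ᵥ (Z - A *ᵥ W)) := by
    rw [hWt, mulVec_mulVec, add_sub_cancel_left]
  refine ⟨hAWt, fun x hx => ?_⟩
  have hsq : ∀ v w : Fin n → ℝ, ∑ i, (v i - w i) ^ 2 = (v - w) ⬝ᵥ (v - w) := fun v w => by
    simp only [dotProduct, Pi.sub_apply, sq]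
  have hpyth := sub_dotProduct_self_eq_of_mulVec_eq (hx.trans hAWt.symm) hrow
  rw [hsq, hsq, hpyth]
  exact ⟨le_add_of_nonneg_left (dotProduct_self_nonneg _), by
    rw [eq_comm, add_eq_right, dotProduct_self_eq_zero, sub_eq_zero]⟩
end

section
/- Let G be a finite simple graph on a vertex type V that is a tree (connected with unique paths between any two vertices), and fix a root vertex b. For each leaf l (a vertex of degree 1 with l ≠ b), let f_l : G.edgeSet → ℝ be the indicator function of the set of edges lying on the unique path in G from b to l. Then the family (f_l), indexed by the leaves l ≠ b, is linearly independent. (Corollary 3.2: the incidence matrix of edges over root-to-leaf paths in a tree has full row rank.) -/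
/-!
Each leaf `l ≠ b` has a unique incident edge `e_l`. It lies on the path from `b` to `l` and on
no other root-to-leaf path, because a path can only pass through a vertex of degree one by
ending there. So evaluating at the edges `e_l` sends the family to the standard basis.
-/

open SimpleGraph

theorem Pi.linearIndependent_of_apply_comp_eq_single {ι κ R : Type*} [Semiring R] [DecidableEq ι]
    {v : ι → κ → R} (e : ι → κ) (h : ∀ i j, v i (e j) = (Pi.single i 1 : ι → R) j) :
    LinearIndependent R v :=
  have hcomp : LinearMap.funLeft R R e ∘ v = fun i => Pi.single i 1 :=
    funext fun i => funext (h i)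
  .of_comp _ (hcomp ▸ Pi.linearIndependent_single_one ι R)

namespace SimpleGraph.Walk

variable {V : Type*} {G : SimpleGraph V} {u v w x : V}

theorem IsPath.eq_or_eq_of_degree_eq_one [Fintype (G.neighborSet w)] {p : G.Walk u v}
    (hp : p.IsPath) (hw : G.degree w = 1) (hmem : w ∈ p.support) : w = u ∨ w = v := by
  by_contra! hne
  obtain ⟨q, r, rfl⟩ := p.mem_support_iff_exists_append.mp hmem
  have hq : ¬q.Nil := not_nil_of_ne hne.1.symm
  have hr : ¬r.Nil := not_nil_of_ne hne.2
  obtain ⟨y, -, hy⟩ := degree_eq_one_iff_existsUnique_adj.mp hw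
  have hsame : q.penultimate = r.snd :=
    (hy _ (q.adj_penultimate hq).symm).trans (hy _ (r.adj_snd hr)).symm
  have hnodup := hp.edges_nodup
  rw [edges_append] at hnodup
  refine List.disjoint_of_nodup_append hnodup (q.mk_penultimate_end_mem_edges hq) ?_
  rw [hsame, Sym2.eq_swap]
  exact r.mk_start_snd_mem_edges hr

theorem IsPath.mk_mem_edges_iff_of_degree_eq_one [Fintype (G.neighborSet w)] {p : G.Walk u v}
    (hp : p.IsPath) (hw : G.degree w = 1) (hwu : w ≠ u) (hx : G.Adj w x) :
    s(w, x) ∈ p.edges ↔ w = v := by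
  constructor
  · intro hmem
    exact (hp.eq_or_eq_of_degree_eq_one hw (p.fst_mem_support_of_mem_edges hmem)).resolve_left hwu
  · rintro rfl
    have hp_nil : ¬p.Nil := not_nil_of_ne hwu.symm
    obtain ⟨y, -, hy⟩ := degree_eq_one_iff_existsUnique_adj.mp hw
    rw [hy x hx, ← hy _ (p.adj_penultimate hp_nil).symm, Sym2.eq_swap]
    exact p.mk_penultimate_end_mem_edges hp_nil

end SimpleGraph.Walk

theorem stmt_1_general {V : Type*} [Fintype V] [DecidableEq V]
    (G : SimpleGraph V) [DecidableRel G.Adj]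
    (b : V)
    (p : ∀ l : V, G.Path b l) :
    LinearIndependent ℝ
      (fun l : {l : V // G.degree l = 1 ∧ l ≠ b} =>
        fun e : G.edgeSet =>
          if (e : Sym2 V) ∈ (p l.1).1.edges then (1 : ℝ) else 0) := by
  have hleaf_adj (l : {l : V // G.degree l = 1 ∧ l ≠ b}) : ∃ x, G.Adj l.1 x :=
    (degree_eq_one_iff_existsUnique_adj.mp l.2.1).exists
  choose x hx using hleaf_adj
  refine Pi.linearIndependent_of_apply_comp_eq_single
    (fun l => ⟨s(l.1, x l), G.mem_edgeSet.mpr (hx l)⟩) fun i j => ?_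
  simp only [(p i.1).2.mk_mem_edges_iff_of_degree_eq_one j.2.1 j.2.2 (hx j), Pi.single_apply,
    ← Subtype.ext_iff, eq_comm]

/-- Corollary 3.2: in a tree, the indicator vectors (over the edge set) of the
unique root-to-leaf paths form a linearly independent family. -/
theorem stmt_1 {V : Type*} [Fintype V] [DecidableEq V]
    (G : SimpleGraph V) [DecidableRel G.Adj]
    (hG : G.IsTree) (b : V)
    (p : ∀ l : V, G.Path b l) :
    LinearIndependent ℝ
      (fun l : {l : V // G.degree l = 1 ∧ l ≠ b} =>
        fun e : G.edgeSet =>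
          if (e : Sym2 V) ∈ (p l.1).1.edges then (1 : ℝ) else 0) :=
  stmt_1_general G b p
end
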